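/- Let x be a decision node with remaining supply t > 1 such that f_1(x) < t and f_2(x) < t. Then the efficiency of an allocation from x is at least the efficiency of the residual allocation after the first item is sold: for every integer k with 1 ≤ k ≤ t, SW(k|x)·OPT(x + e_1) ≥ SW(k − 1 | x + e_1)·OPT(x), and for every integer k with 0 ≤ k ≤ t − 1, SW(k|x)·OPT(x + e_2) ≥ SW(k | x + e_2)·OPT(x). -/

import Mathlib

/-! Selling the first item to buyer `i` shifts every allocation by one item: the welfare from
`x + e i` is the welfare of the corresponding allocation from `x` minus `a = v_i(1|x)`. Because
`f_{-i}(x) < t`, buyer `-i`'s `t`-th item is worth at most buyer `i`'s first, so some optimal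
allocation from `x` gives buyer `i` an item and `OPT(x + e i) = OPT(x) - a`. The claim becomes
`(S - a) · O ≤ S · (O - a)`, i.e. `a · S ≤ a · O`, which holds as `S ≤ O` and `a ≥ 0`. -/

open Finset

noncomputable section

/-- The opponent of buyer `i`. -/
def other (i : Fin 2) : Fin 2 := 1 - i

/-- The standard unit vector of buyer `i`: winning one item moves `x` to `x + e i`. -/
def e (i : Fin 2) : Fin 2 → ℕ := Pi.single i 1

/-- Remaining supply `t(x) = T - x₁ - x₂` at node `x`. -/
def supply (T : ℕ) (x : Fin 2 → ℕ) : ℕ := T - (x 0 + x 1)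

/-- `x` is a decision node: `x₁ + x₂ < T`. -/
def IsDecision (T : ℕ) (x : Fin 2 → ℕ) : Prop := x 0 + x 1 < T

/-- Incremental value `v_i(k|x) = v_i(x_i + k)`. -/
def val (v : Fin 2 → ℕ → ℝ) (i : Fin 2) (k : ℕ) (x : Fin 2 → ℕ) : ℝ := v i (x i + k)

/-- Valuations are nonnegative and weakly decreasing. -/
def Admissible (v : Fin 2 → ℕ → ℝ) : Prop := ∀ i k, 0 ≤ v i k ∧ v i (k + 1) ≤ v i k

/-- Greedy payoff `μ̄_i(k|x) = Σ_{j=1}^k v_i(j|x) - k · v_{-i}(t-k+1|x)`. -/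
def gbar (T : ℕ) (v : Fin 2 → ℕ → ℝ) (i : Fin 2) (k : ℕ) (x : Fin 2 → ℕ) : ℝ :=
  (∑ j ∈ Finset.Icc 1 k, val v i j x) - (k : ℝ) * val v (other i) (supply T x - k + 1) x

/-- Greedy utility `μ_i(x) = max_{0 ≤ k ≤ t} μ̄_i(k|x)` (equal to `0` at terminal nodes). -/
def gu (T : ℕ) (v : Fin 2 → ℕ → ℝ) (i : Fin 2) (x : Fin 2 → ℕ) : ℝ :=
  Finset.sup' (Finset.range (supply T x + 1)) Finset.nonempty_range_add_one
    (fun k => gbar T v i k x)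

/-- Greedy demand `κ_i(x)`: the least `k ∈ {0,…,t}` attaining the greedy utility. -/
def gd (T : ℕ) (v : Fin 2 → ℕ → ℝ) (i : Fin 2) (x : Fin 2 → ℕ) : ℕ :=
  sInf {k | k ≤ supply T x ∧ gbar T v i k x = gu T v i x}

/-- Duopsony factor `f_i(x) = max ({k ∈ {1,…,t} : v_i(k|x) > v_{-i}(t-k+1|x)} ∪ {0})`. -/
def df (T : ℕ) (v : Fin 2 → ℕ → ℝ) (i : Fin 2) (x : Fin 2 → ℕ) : ℕ :=
  sSup {k | 1 ≤ k ∧ k ≤ supply T x ∧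
    val v (other i) (supply T x - k + 1) x < val v i k x}

/-- Baseline price `β_i(x)`. -/
def base (T : ℕ) (v : Fin 2 → ℕ → ℝ) (i : Fin 2) (x : Fin 2 → ℕ) : ℝ :=
  if df T v i x = 0 then val v i 1 x
  else val v (other i) (supply T x - gd T v i x + 1) x

/-- Threshold price `p_i(x) = v_i(1|x) + μ_i(x+e_i) - μ_i(x+e_{-i})`. -/
def tp (T : ℕ) (v : Fin 2 → ℕ → ℝ) (i : Fin 2) (x : Fin 2 → ℕ) : ℝ :=
  val v i 1 x + gu T v i (x + e i) - gu T v i (x + e (other i))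

/-- Social welfare of awarding `k` of the `t` remaining items to buyer 1. -/
def sw (T : ℕ) (v : Fin 2 → ℕ → ℝ) (k : ℕ) (x : Fin 2 → ℕ) : ℝ :=
  (∑ i ∈ Finset.Icc 1 k, val v 0 i x) + (∑ i ∈ Finset.Icc 1 (supply T x - k), val v 1 i x)

/-- Optimal social welfare `OPT(x) = max_{0 ≤ k ≤ t} SW(k|x)`. -/
def opt (T : ℕ) (v : Fin 2 → ℕ → ℝ) (x : Fin 2 → ℕ) : ℝ :=
  Finset.sup' (Finset.range (supply T x + 1)) Finset.nonempty_range_add_one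
    (fun k => sw T v k x)

theorem Finset.sum_Icc_one_comp_add_one {M : Type*} [AddCommMonoid M] (g : ℕ → M) (k : ℕ) :
    g 1 + ∑ i ∈ Icc 1 k, g (i + 1) = ∑ i ∈ Icc 1 (k + 1), g i := by
  induction k with
  | zero => simp
  | succ n ih =>
    rw [sum_Icc_succ_top (by omega), ← add_assoc, ih, sum_Icc_succ_top (by omega : 1 ≤ n + 1 + 1)]

theorem Finset.sup'_range_succ_eq_of_le_one {α : Type*} [SemilatticeSup α] (f : ℕ → α) {n : ℕ}
    (hn : n ≠ 0) (h : f 0 ≤ f 1) :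
    (range (n + 1)).sup' nonempty_range_add_one f =
      (range n).sup' (nonempty_range_iff.2 hn) (fun k => f (k + 1)) := by
  refine le_antisymm (sup'_le _ _ fun k hk => ?_) (sup'_le _ _ fun k hk => ?_)
  · rcases k with _ | k
    · exact h.trans (le_sup' (fun k => f (k + 1)) (mem_range.2 (Nat.pos_of_ne_zero hn)))
    · exact le_sup' (fun k => f (k + 1)) (mem_range.2 (by simpa using hk))
  · exact le_sup' f (mem_range.2 (by simpa using hk))

theorem Finset.sup'_range_succ_eq_of_le_pred {α : Type*} [SemilatticeSup α] (f : ℕ → α) {n : ℕ}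
    (hn : n ≠ 0) (h : f n ≤ f (n - 1)) :
    (range (n + 1)).sup' nonempty_range_add_one f = (range n).sup' (nonempty_range_iff.2 hn) f := by
  refine le_antisymm (sup'_le _ _ fun k hk => ?_) (sup'_le _ _ fun k hk => ?_)
  · obtain hk | rfl := (mem_range_succ_iff.1 hk).lt_or_eq
    · exact le_sup' f (mem_range.2 hk)
    · exact h.trans (le_sup' f (mem_range.2 (by omega)))
  · exact le_sup' f (mem_range.2 (by simp at hk; omega))

theorem sub_mul_le_mul_sub_of_le {R : Type*} [CommRing R] [PartialOrder R] [IsOrderedRing R]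
    {a b c : R} (hab : a ≤ b) (hc : 0 ≤ c) : (a - c) * b ≤ a * (b - c) := by
  rw [sub_mul, mul_sub, mul_comm a c]
  exact sub_le_sub_left (mul_le_mul_of_nonneg_left hab hc) _

lemma add_e_self (x : Fin 2 → ℕ) (i : Fin 2) : (x + e i) i = x i + 1 := by
  simp [e]

lemma add_e_of_ne (x : Fin 2 → ℕ) {i j : Fin 2} (h : j ≠ i) : (x + e i) j = x j := by
  simp [e, h]

lemma supply_add_e (T : ℕ) (x : Fin 2 → ℕ) (i : Fin 2) : supply T (x + e i) = supply T x - 1 := by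
  fin_cases i <;> simp [supply, e] <;> omega

lemma val_add_e_self (v : Fin 2 → ℕ → ℝ) (i : Fin 2) (k : ℕ) (x : Fin 2 → ℕ) :
    val v i k (x + e i) = val v i (k + 1) x := by
  simp only [_root_.val, add_e_self, add_right_comm, add_assoc]

lemma val_add_e_of_ne (v : Fin 2 → ℕ → ℝ) {i j : Fin 2} (h : j ≠ i) (k : ℕ) (x : Fin 2 → ℕ) :
    val v j k (x + e i) = val v j k x := by
  simp only [_root_.val, add_e_of_ne x h]

lemma Admissible.val_nonneg {v : Fin 2 → ℕ → ℝ} (hv : Admissible v) (i : Fin 2) (k : ℕ)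
    (x : Fin 2 → ℕ) : 0 ≤ val v i k x :=
  (hv i _).1

section Welfare

variable {T : ℕ} {v : Fin 2 → ℕ → ℝ} {x : Fin 2 → ℕ}

lemma sw_le_opt {k : ℕ} (hk : k ≤ supply T x) : sw T v k x ≤ opt T v x :=
  le_sup' (fun k => sw T v k x) (mem_range.2 (Nat.lt_succ_of_le hk))

lemma sw_succ {k : ℕ} (hk : k < supply T x) :
    sw T v (k + 1) x = sw T v k x + val v 0 (k + 1) x - val v 1 (supply T x - k) x := by
  obtain ⟨m, hm⟩ : ∃ m, supply T x - k = m + 1 := ⟨supply T x - k - 1, by omega⟩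
  have hm' : supply T x - (k + 1) = m := by omega
  rw [sw, sw, hm, hm', sum_Icc_succ_top (by omega), sum_Icc_succ_top (by omega)]
  ring

lemma sw_add_e_zero (k : ℕ) : sw T v k (x + e 0) = sw T v (k + 1) x - val v 0 1 x := by
  have hsupply : supply T (x + e 0) - k = supply T x - (k + 1) := by
    rw [supply_add_e]; omega
  rw [sw, sw, hsupply, ← sum_Icc_one_comp_add_one]
  simp only [val_add_e_self, val_add_e_of_ne v (by decide : (1 : Fin 2) ≠ 0)]
  ring

lemma sw_add_e_one {k : ℕ} (hk : k < supply T x) :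
    sw T v k (x + e 1) = sw T v k x - val v 1 1 x := by
  have hsupply : supply T x - k = supply T (x + e 1) - k + 1 := by
    rw [supply_add_e]; omega
  rw [sw, sw, hsupply, ← sum_Icc_one_comp_add_one]
  simp only [val_add_e_self, val_add_e_of_ne v (by decide : (0 : Fin 2) ≠ 1)]
  ring

lemma val_supply_le_of_df_lt {i : Fin 2} (h : df T v i x < supply T x) :
    val v i (supply T x) x ≤ val v (other i) 1 x := by
  by_contra! hlt
  have hmem : supply T x ∈ {k | 1 ≤ k ∧ k ≤ supply T x ∧
      val v (other i) (supply T x - k + 1) x < val v i k x} :=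
    ⟨by omega, le_rfl, by rwa [Nat.sub_self]⟩
  exact h.not_ge (le_csSup ⟨supply T x, fun k hk => hk.2.1⟩ hmem)

lemma sw_zero_le_sw_one (h : df T v 1 x < supply T x) : sw T v 0 x ≤ sw T v 1 x := by
  have hval : val v 1 (supply T x) x ≤ val v 0 1 x := val_supply_le_of_df_lt h
  rw [sw_succ (by omega), Nat.sub_zero]
  linarith

lemma sw_supply_le_sw_pred (h : df T v 0 x < supply T x) :
    sw T v (supply T x) x ≤ sw T v (supply T x - 1) x := by
  have hval : val v 0 (supply T x) x ≤ val v 1 1 x := val_supply_le_of_df_lt h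
  have hsucc := sw_succ (T := T) (v := v) (x := x) (k := supply T x - 1) (by omega)
  rw [Nat.sub_add_cancel (by omega), Nat.sub_sub_self (by omega)] at hsucc
  linarith

lemma opt_add_e_zero (h : df T v 1 x < supply T x) :
    opt T v (x + e 0) = opt T v x - val v 0 1 x := by
  have ht : supply T x ≠ 0 := by omega
  have hrange : range (supply T (x + e 0) + 1) = range (supply T x) := by
    rw [supply_add_e]; congr 1; omega
  calc opt T v (x + e 0)
      = (range (supply T x)).sup' (nonempty_range_iff.2 ht)
          (fun k => sw T v (k + 1) x + -val v 0 1 x) :=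
        sup'_congr _ hrange fun k _ => by rw [sw_add_e_zero, sub_eq_add_neg]
    _ = opt T v x - val v 0 1 x := by
        rw [← sup'_add, opt, sup'_range_succ_eq_of_le_one _ ht (sw_zero_le_sw_one h),
          sub_eq_add_neg]

lemma opt_add_e_one (h : df T v 0 x < supply T x) :
    opt T v (x + e 1) = opt T v x - val v 1 1 x := by
  have ht : supply T x ≠ 0 := by omega
  have hrange : range (supply T (x + e 1) + 1) = range (supply T x) := by
    rw [supply_add_e]; congr 1; omega
  calc opt T v (x + e 1)
      = (range (supply T x)).sup' (nonempty_range_iff.2 ht) (fun k => sw T v k x + -val v 1 1 x) :=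
        sup'_congr _ hrange fun k hk => by
          rw [sw_add_e_one (mem_range.1 (hrange ▸ hk)), sub_eq_add_neg]
    _ = opt T v x - val v 1 1 x := by
        rw [← sup'_add, opt, sup'_range_succ_eq_of_le_pred _ ht (sw_supply_le_sw_pred h),
          sub_eq_add_neg]

end Welfare

theorem stmt14_general (T : ℕ) (v : Fin 2 → ℕ → ℝ) (hv : Admissible v)
    (x : Fin 2 → ℕ) (h1 : df T v 0 x < supply T x) (h2 : df T v 1 x < supply T x) :
    (∀ k, 1 ≤ k → k ≤ supply T x →
      sw T v (k - 1) (x + e 0) * opt T v x ≤ sw T v k x * opt T v (x + e 0)) ∧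
    (∀ k, k ≤ supply T x - 1 →
      sw T v k (x + e 1) * opt T v x ≤ sw T v k x * opt T v (x + e 1)) := by
  refine ⟨fun k hk1 hk => ?_, fun k hk => ?_⟩
  · obtain ⟨j, rfl⟩ : ∃ j, k = j + 1 := ⟨k - 1, by omega⟩
    rw [Nat.add_sub_cancel, sw_add_e_zero, opt_add_e_zero h2]
    exact sub_mul_le_mul_sub_of_le (sw_le_opt hk) (hv.val_nonneg 0 1 x)
  · rw [sw_add_e_one (by omega), opt_add_e_one h1]
    exact sub_mul_le_mul_sub_of_le (sw_le_opt (by omega)) (hv.val_nonneg 1 1 x)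

/-- If neither buyer has monopsony power then the efficiency of an allocation from
`x` is at least the efficiency of the residual allocation after the first sale. -/
theorem stmt14 (T : ℕ) (v : Fin 2 → ℕ → ℝ) (hv : Admissible v)
    (x : Fin 2 → ℕ) (hx : IsDecision T x) (ht : 1 < supply T x)
    (h1 : df T v 0 x < supply T x) (h2 : df T v 1 x < supply T x) :
    (∀ k, 1 ≤ k → k ≤ supply T x →
      sw T v (k - 1) (x + e 0) * opt T v x ≤ sw T v k x * opt T v (x + e 0)) ∧
    (∀ k, k ≤ supply T x - 1 →
      sw T v k (x + e 1) * opt T v x ≤ sw T v k x * opt T v (x + e 1)) :=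
  stmt14_general T v hv x h1 h2
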